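/- arXiv:1505.06155 — 2 statements merged into one kernel-verified Lean document; each statement's English description precedes it below -/
import Mathlib

section
/- Let G and H be connected graphs, each with at least two vertices, having t₁ and t₂ true twin equivalence classes respectively. Then the vertex set of the strong product G ⊠ H is partitioned into exactly t₁·t₂ true twin equivalence classes, namely the sets U × U' where U is a true twin equivalence class of G and U' is a true twin equivalence class of H. -/
open SimpleGraph

/-- The strong product of two simple graphs. -/
def strongProd {α β : Type*} (G : SimpleGraph α) (H : SimpleGraph β) :
    SimpleGraph (α × β) where
  Adj x y := (x.1 = y.1 ∧ H.Adj x.2 y.2) ∨ (x.2 = y.2 ∧ G.Adj x.1 y.1) ∨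
      (G.Adj x.1 y.1 ∧ H.Adj x.2 y.2)
  symm := by
    constructor
    rintro x y (⟨h1, h2⟩ | ⟨h1, h2⟩ | ⟨h1, h2⟩)
    · exact Or.inl ⟨h1.symm, h2.symm⟩
    · exact Or.inr (Or.inl ⟨h1.symm, h2.symm⟩)
    · exact Or.inr (Or.inr ⟨h1.symm, h2.symm⟩)
  loopless := by
    constructor
    rintro x (⟨_, h⟩ | ⟨_, h⟩ | ⟨h, _⟩)
    · exact H.loopless.irrefl _ h
    · exact G.loopless.irrefl _ h
    · exact G.loopless.irrefl _ h

/-- A set `S` is a local metric generator for `G` if every pair of adjacent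
vertices is distinguished by some element of `S`. -/
def IsLocalMetricGenerator {α : Type*} (G : SimpleGraph α) (S : Set α) : Prop :=
  ∀ u v : α, G.Adj u v → ∃ s ∈ S, G.dist u s ≠ G.dist v s

/-- The local metric dimension of a graph. -/
noncomputable def localMetricDim {α : Type*} [Fintype α] (G : SimpleGraph α) : ℕ :=
  sInf {n | ∃ S : Finset α, S.card = n ∧ IsLocalMetricGenerator G ↑S}

/-- A set `S` is a metric generator for `G` if every pair of distinct
vertices is distinguished by some element of `S`. -/
def IsMetricGenerator {α : Type*} (G : SimpleGraph α) (S : Set α) : Prop :=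
  ∀ u v : α, u ≠ v → ∃ s ∈ S, G.dist u s ≠ G.dist v s

/-- The metric dimension of a graph. -/
noncomputable def metricDim {α : Type*} [Fintype α] (G : SimpleGraph α) : ℕ :=
  sInf {n | ∃ S : Finset α, S.card = n ∧ IsMetricGenerator G ↑S}

/-- The eccentricity of a vertex: the maximum distance to another vertex. -/
noncomputable def eccentricity {α : Type*} (G : SimpleGraph α) (v : α) : ℕ :=
  sSup {d | ∃ u, G.dist v u = d}

/-- The diameter of a graph: maximum eccentricity. -/
noncomputable def graphDiam {α : Type*} (G : SimpleGraph α) : ℕ :=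
  sSup {d | ∃ v, eccentricity G v = d}

/-- The radius of a graph: minimum eccentricity. -/
noncomputable def graphRadius {α : Type*} (G : SimpleGraph α) : ℕ :=
  sInf {d | ∃ v, eccentricity G v = d}

/-- The interval `I[x,y]`: vertices lying on some shortest `x`–`y` path. -/
def interval {α : Type*} (G : SimpleGraph α) (x y : α) : Set α :=
  {w | G.dist x w + G.dist w y = G.dist x y}

/-- A graph is adjacency `k`-resolved if for every pair of adjacent vertices
`x, y` there is a vertex `w` with `d(y,w) ≥ k` and `x ∈ I[y,w]`, or
`d(x,w) ≥ k` and `y ∈ I[x,w]`. -/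
def AdjKResolved {α : Type*} (G : SimpleGraph α) (k : ℕ) : Prop :=
  ∀ x y : α, G.Adj x y →
    ∃ w : α, (k ≤ G.dist y w ∧ x ∈ interval G y w) ∨
      (k ≤ G.dist x w ∧ y ∈ interval G x w)

/-- The true twin equivalence relation: `u ≈ v` iff `N[u] = N[v]`. -/
def trueTwinSetoid {α : Type*} (G : SimpleGraph α) : Setoid α where
  r u v := insert u (G.neighborSet u) = insert v (G.neighborSet v)
  iseqv := ⟨fun _ => rfl, Eq.symm, Eq.trans⟩

/-! The closed neighbourhood of `(a, b)` in `G ⊠ H` is `N[a] ×ˢ N[b]`, and a product of nonempty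
sets determines its factors. Hence twins in `G ⊠ H` are exactly the pairs of twins, so the twin
relation of `G ⊠ H` is the product of the twin relations of `G` and `H`. -/

theorem insert_neighborSet_strongProd {α β : Type*} (G : SimpleGraph α) (H : SimpleGraph β)
    (p : α × β) :
    insert p ((strongProd G H).neighborSet p) =
      insert p.1 (G.neighborSet p.1) ×ˢ insert p.2 (H.neighborSet p.2) := by
  ext ⟨x, y⟩
  simp only [Set.mem_insert_iff, mem_neighborSet, strongProd, Set.mem_prod, Prod.ext_iff]
  grind

theorem trueTwinSetoid_strongProd {α β : Type*} (G : SimpleGraph α) (H : SimpleGraph β) :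
    trueTwinSetoid (strongProd G H) = (trueTwinSetoid G).prod (trueTwinSetoid H) := by
  ext p q
  change insert p _ = insert q _ ↔ _
  rw [insert_neighborSet_strongProd, insert_neighborSet_strongProd,
    Set.prod_eq_prod_iff_of_nonempty ((Set.insert_nonempty _ _).prod (Set.insert_nonempty _ _))]
  rfl

theorem Setoid.classes_prod {α β : Type*} (r : Setoid α) (s : Setoid β) :
    (r.prod s).classes = {C | ∃ U ∈ r.classes, ∃ U' ∈ s.classes, C = U ×ˢ U'} := by
  ext C
  constructor
  · rintro ⟨⟨a, b⟩, rfl⟩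
    exact ⟨{x | r x a}, r.mem_classes a, {y | s y b}, s.mem_classes b, rfl⟩
  · rintro ⟨U, ⟨a, rfl⟩, U', ⟨b, rfl⟩, rfl⟩
    exact ⟨(a, b), rfl⟩

theorem stmt4_general {α β : Type*}
    (G : SimpleGraph α) (H : SimpleGraph β)
    (t1 t2 : ℕ)
    (ht1 : Nat.card (Quotient (trueTwinSetoid G)) = t1)
    (ht2 : Nat.card (Quotient (trueTwinSetoid H)) = t2) :
    Setoid.classes (trueTwinSetoid (strongProd G H)) =
      {C | ∃ U ∈ Setoid.classes (trueTwinSetoid G),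
        ∃ U' ∈ Setoid.classes (trueTwinSetoid H), C = U ×ˢ U'} ∧
    Nat.card (Quotient (trueTwinSetoid (strongProd G H))) = t1 * t2 := by
  rw [trueTwinSetoid_strongProd]
  refine ⟨Setoid.classes_prod _ _, ?_⟩
  rw [← Nat.card_congr ((trueTwinSetoid G).prodQuotientEquiv (trueTwinSetoid H)), Nat.card_prod,
    ht1, ht2]

/-- the true twin equivalence classes of `G ⊠ H` are exactly the
products of classes of `G` with classes of `H`, and there are `t₁·t₂` of them. -/
theorem stmt4 {α β : Type*} [Fintype α] [Fintype β]
    (G : SimpleGraph α) (H : SimpleGraph β)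
    (hG : G.Connected) (hH : H.Connected)
    (hn1 : 2 ≤ Fintype.card α) (hn2 : 2 ≤ Fintype.card β)
    (t1 t2 : ℕ)
    (ht1 : Nat.card (Quotient (trueTwinSetoid G)) = t1)
    (ht2 : Nat.card (Quotient (trueTwinSetoid H)) = t2) :
    Setoid.classes (trueTwinSetoid (strongProd G H)) =
      {C | ∃ U ∈ Setoid.classes (trueTwinSetoid G),
        ∃ U' ∈ Setoid.classes (trueTwinSetoid H), C = U ×ˢ U'} ∧
    Nat.card (Quotient (trueTwinSetoid (strongProd G H))) = t1 * t2 :=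
  stmt4_general G H t1 t2 ht1 ht2
end

section
/- Let G and H be connected graphs, each with at least two vertices, with H bipartite. Let u₁, u₂, u₃ ∈ V(G) and v₁, v₂ ∈ V(H) be such that u₂ ∈ I_G[u₁, u₃], d_G(u₁, u₂) ≤ d_H(v₁, v₂) = D(H), and d_G(u₂, u₃) ≥ D(H), where D(H) is the diameter of H. Then for any shortest path P in G from u₁ to u₂, the set B = {(u₁,v₁), (u₂,v₂), (u₃,v₁)} resolves V(P) × V(H) in G ⊠ H; that is, for every pair of adjacent vertices (u_i, v_j), (u_k, v_l) of G ⊠ H with u_i, u_k ∈ V(P), there exists w ∈ B such that d_{G⊠H}(w, (u_i,v_j)) ≠ d_{G⊠H}(w, (u_k,v_l)). -/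
open SimpleGraph

/-
Distances in `G ⊠ H` are maxima of the coordinate distances. For two adjacent vertices
`(a, b)`, `(c, d)` over `P` there are two cases.

If `a ≠ c`, the landmark `(u₃, v₁)` separates them: `u₂` lies between every vertex of `P` and
`u₃`, so the `G`-distance to `u₃` is at least `D(H)` and dominates the `H`-distance; and distinct
vertices of a shortest path have distinct distances to its ends.

If `a = c`, then `b` and `d` are adjacent in the bipartite graph `H`, so their distances to any
vertex differ in parity. If neither `(u₁, v₁)` nor `(u₂, v₂)` separated them, the `G`-distance
would strictly dominate the smaller of the two `H`-distances at both landmarks, giving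
`d_G(u₁, u₂) = d_G(u₁, a) + d_G(a, u₂) > d_H(v₁, v₂)`.
-/

namespace SimpleGraph

variable {α β γ : Type*} {G : SimpleGraph α} {H : SimpleGraph β}

section Geodesic

variable {u v z z' : α}

lemma Walk.length_takeUntil_eq_dist_and_length_dropUntil_eq_dist [DecidableEq α]
    {p : G.Walk u v} (hp : p.length = G.dist u v) (hz : z ∈ p.support) :
    (p.takeUntil z hz).length = G.dist u z ∧ (p.dropUntil z hz).length = G.dist z v := by
  have hsplit : (p.takeUntil z hz).length + (p.dropUntil z hz).length = p.length := by
    rw [← Walk.length_append, p.take_spec hz]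
  have htake : G.dist u z ≤ (p.takeUntil z hz).length := dist_le _
  have hdrop : G.dist z v ≤ (p.dropUntil z hz).length := dist_le _
  have htri : G.dist u v ≤ G.dist u z + G.dist z v :=
    (p.takeUntil z hz).reachable.dist_triangle_left v
  omega

lemma Walk.mem_interval_of_length_eq_dist {p : G.Walk u v} (hp : p.length = G.dist u v)
    (hz : z ∈ p.support) : z ∈ interval G u v := by
  classical
  obtain ⟨htake, hdrop⟩ := p.length_takeUntil_eq_dist_and_length_dropUntil_eq_dist hp hz
  rw [interval, Set.mem_ofPred_eq, ← htake, ← hdrop, ← Walk.length_append, p.take_spec hz, hp]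

lemma Walk.eq_of_dist_eq_of_length_eq_dist {p : G.Walk u v} (hp : p.length = G.dist u v)
    (hz : z ∈ p.support) (hz' : z' ∈ p.support) (h : G.dist z v = G.dist z' v) : z = z' := by
  classical
  have hzI := p.mem_interval_of_length_eq_dist hp hz
  have hzI' := p.mem_interval_of_length_eq_dist hp hz'
  rw [interval, Set.mem_ofPred_eq] at hzI hzI'
  rw [← p.getVert_length_takeUntil hz, ← p.getVert_length_takeUntil hz',
    (p.length_takeUntil_eq_dist_and_length_dropUntil_eq_dist hp hz).1,
    (p.length_takeUntil_eq_dist_and_length_dropUntil_eq_dist hp hz').1]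
  congr 1
  omega

lemma Connected.mem_interval_of_mem_interval (hG : G.Connected) {u₁ u₂ u₃ : α}
    (hz : z ∈ interval G u₁ u₂) (hu₂ : u₂ ∈ interval G u₁ u₃) : u₂ ∈ interval G z u₃ := by
  simp only [interval, Set.mem_ofPred_eq] at *
  have h₁ : G.dist z u₃ ≤ G.dist z u₂ + G.dist u₂ u₃ := hG.dist_triangle
  have h₂ : G.dist u₁ u₃ ≤ G.dist u₁ z + G.dist z u₃ := hG.dist_triangle
  omega

end Geodesic

lemma Connected.dist_le_length_of_dist_le_one (hG : G.Connected) {K : SimpleGraph γ}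
    (f : γ → α) (hf : ∀ x y, K.Adj x y → G.dist (f x) (f y) ≤ 1) :
    ∀ {x y : γ} (p : K.Walk x y), G.dist (f x) (f y) ≤ p.length
  | _, _, .nil => by simp
  | x, y, .cons (v := z) h p => by
    have ih := hG.dist_le_length_of_dist_le_one f hf p
    have htri : G.dist (f x) (f y) ≤ G.dist (f x) (f z) + G.dist (f z) (f y) := hG.dist_triangle
    have hstep := hf x z h
    rw [Walk.length_cons]
    omega

lemma Colorable.dist_ne_dist_of_adj (h2 : H.Colorable 2) (hH : H.Connected) {b d : β}
    (hbd : H.Adj b d) (v : β) : H.dist v b ≠ H.dist v d := by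
  obtain ⟨C⟩ := h2
  obtain c : H.Coloring Bool := recolorOfEquiv H finTwoEquiv C
  obtain ⟨p, hp⟩ := hH.exists_walk_length_eq_dist v b
  obtain ⟨q, hq⟩ := hH.exists_walk_length_eq_dist v d
  have hp' := c.even_length_iff_congr p
  have hq' := c.even_length_iff_congr q
  have hcbd : c b ≠ c d := c.valid hbd
  intro h
  have hcol : (c v ↔ c b) ↔ (c v ↔ c d) := hp'.symm.trans (by rw [hp, h, ← hq]; exact hq')
  exact hcbd (by revert hcol; cases c v <;> cases c b <;> cases c d <;> decide)

end SimpleGraph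

lemma dist_le_graphDiam {β : Type*} [Finite β] (H : SimpleGraph β) (v b : β) :
    H.dist v b ≤ graphDiam H :=
  calc H.dist v b ≤ eccentricity H v :=
        le_csSup (Set.finite_range (H.dist v)).bddAbove ⟨b, rfl⟩
    _ ≤ graphDiam H := le_csSup (Set.finite_range (eccentricity H)).bddAbove ⟨v, rfl⟩

namespace StrongProd

variable {α β : Type*} {G : SimpleGraph α} {H : SimpleGraph β}

def inclLeft (b : β) : G →g strongProd G H :=
  ⟨fun a ↦ (a, b), fun h ↦ Or.inr (Or.inl ⟨rfl, h⟩)⟩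

def inclRight (a : α) : H →g strongProd G H :=
  ⟨fun b ↦ (a, b), fun h ↦ Or.inl ⟨rfl, h⟩⟩

lemma adj_snd_of_fst_eq {a : α} {b d : β} (h : (strongProd G H).Adj (a, b) (a, d)) :
    H.Adj b d := by
  rcases h with ⟨-, h⟩ | ⟨-, h⟩ | ⟨h, -⟩
  · exact h
  · exact absurd h (G.loopless.irrefl a)
  · exact absurd h (G.loopless.irrefl a)

lemma dist_le_one_of_adj {x y : α × β} (h : (strongProd G H).Adj x y) :
    G.dist x.1 y.1 ≤ 1 ∧ H.dist x.2 y.2 ≤ 1 := by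
  rcases h with ⟨h₁, h₂⟩ | ⟨h₁, h₂⟩ | ⟨h₁, h₂⟩
  · exact ⟨by simp [h₁], (dist_eq_one_iff_adj.2 h₂).le⟩
  · exact ⟨(dist_eq_one_iff_adj.2 h₂).le, by simp [h₁]⟩
  · exact ⟨(dist_eq_one_iff_adj.2 h₁).le, (dist_eq_one_iff_adj.2 h₂).le⟩

lemma exists_walk_length_eq_max :
    ∀ {a c : α} {b d : β} (p : G.Walk a c) (q : H.Walk b d),
      ∃ W : (strongProd G H).Walk (a, b) (c, d), W.length = max p.length q.length
  | a, _, _, _, .nil, q => ⟨q.map (inclRight a), (Walk.length_map _ _).trans (by simp)⟩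
  | _, _, b, _, .cons h p, .nil =>
    ⟨(Walk.cons h p).map (inclLeft b), (Walk.length_map _ _).trans (by simp)⟩
  | _, _, _, _, .cons hp p, .cons hq q => by
    obtain ⟨W, hW⟩ := exists_walk_length_eq_max p q
    exact ⟨.cons (Or.inr (Or.inr ⟨hp, hq⟩)) W, by
      show W.length + 1 = max (p.length + 1) (q.length + 1)
      rw [hW, Nat.succ_max_succ]⟩

variable (hG : G.Connected) (hH : H.Connected)
include hG hH

lemma dist_eq_max (x y : α × β) :
    (strongProd G H).dist x y = max (G.dist x.1 y.1) (H.dist x.2 y.2) := by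
  obtain ⟨p, hp⟩ := hG.exists_walk_length_eq_dist x.1 y.1
  obtain ⟨q, hq⟩ := hH.exists_walk_length_eq_dist x.2 y.2
  obtain ⟨W, hW⟩ := exists_walk_length_eq_max p q
  apply le_antisymm
  · rw [← hp, ← hq, ← hW]
    exact dist_le W
  · have hxy : (strongProd G H).Reachable x y := ⟨W⟩
    obtain ⟨W', hW'⟩ := hxy.exists_walk_length_eq_dist
    rw [← hW']
    exact max_le
      (hG.dist_le_length_of_dist_le_one Prod.fst (fun _ _ h ↦ (dist_le_one_of_adj h).1) W')
      (hH.dist_le_length_of_dist_le_one Prod.snd (fun _ _ h ↦ (dist_le_one_of_adj h).2) W')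

lemma dist_ne_or_dist_ne_of_adj_snd (hbip : H.Colorable 2) {u₁ u₂ a : α} {v₁ v₂ b d : β}
    (ha : a ∈ interval G u₁ u₂) (hd : G.dist u₁ u₂ ≤ H.dist v₁ v₂) (hbd : H.Adj b d) :
    (strongProd G H).dist (u₁, v₁) (a, b) ≠ (strongProd G H).dist (u₁, v₁) (a, d) ∨
      (strongProd G H).dist (u₂, v₂) (a, b) ≠ (strongProd G H).dist (u₂, v₂) (a, d) := by
  rw [interval, Set.mem_ofPred_eq] at ha
  simp only [dist_eq_max hG hH, G.dist_comm (u := u₂)]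
  have h₁ := hbip.dist_ne_dist_of_adj hH hbd v₁
  have h₂ := hbip.dist_ne_dist_of_adj hH hbd v₂
  have hvb : H.dist v₁ v₂ ≤ H.dist v₁ b + H.dist v₂ b :=
    hH.dist_triangle.trans_eq (by rw [H.dist_comm (u := b)])
  have hvd : H.dist v₁ v₂ ≤ H.dist v₁ d + H.dist v₂ d :=
    hH.dist_triangle.trans_eq (by rw [H.dist_comm (u := d)])
  omega

lemma dist_eq_of_mem_interval [Finite β] {u₁ u₂ u₃ z : α} (hz : z ∈ interval G u₁ u₂)
    (hu₂ : u₂ ∈ interval G u₁ u₃) (hD : graphDiam H ≤ G.dist u₂ u₃) (v e : β) :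
    (strongProd G H).dist (u₃, v) (z, e) = G.dist z u₂ + G.dist u₂ u₃ := by
  have hzu := hG.mem_interval_of_mem_interval hz hu₂
  rw [interval, Set.mem_ofPred_eq] at hzu
  rw [dist_eq_max hG hH, G.dist_comm (u := u₃), ← hzu]
  exact max_eq_left ((dist_le_graphDiam H v e).trans (hD.trans (Nat.le_add_left _ _)))

end StrongProd

open StrongProd in
theorem stmt14_general {α β : Type*} [Fintype β]
    (G : SimpleGraph α) (H : SimpleGraph β)
    (hG : G.Connected) (hH : H.Connected)
    (hbip : H.Colorable 2)
    (u₁ u₂ u₃ : α) (v₁ v₂ : β)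
    (hint : u₂ ∈ interval G u₁ u₃)
    (hd1 : G.dist u₁ u₂ ≤ H.dist v₁ v₂)
    (hd3 : graphDiam H ≤ G.dist u₂ u₃)
    (P : G.Walk u₁ u₂) (hPlen : P.length = G.dist u₁ u₂) :
    ∀ x y : α × β, (strongProd G H).Adj x y →
      x.1 ∈ P.support → y.1 ∈ P.support →
        ∃ w ∈ ({(u₁, v₁), (u₂, v₂), (u₃, v₁)} : Set (α × β)),
          (strongProd G H).dist w x ≠ (strongProd G H).dist w y := by
  rintro ⟨a, b⟩ ⟨c, d⟩ hadj ha hc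
  have haI := P.mem_interval_of_length_eq_dist hPlen ha
  have hcI := P.mem_interval_of_length_eq_dist hPlen hc
  by_cases hac : a = c
  · subst hac
    rcases dist_ne_or_dist_ne_of_adj_snd hG hH hbip haI hd1 (adj_snd_of_fst_eq hadj) with h | h
    · exact ⟨_, by simp, h⟩
    · exact ⟨_, by simp, h⟩
  · refine ⟨(u₃, v₁), by simp, ?_⟩
    rw [dist_eq_of_mem_interval hG hH haI hint hd3, dist_eq_of_mem_interval hG hH hcI hint hd3]
    exact fun h ↦ hac (P.eq_of_dist_eq_of_length_eq_dist hPlen ha hc (Nat.add_right_cancel h))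

/-- resolving triads.  If `u₂ ∈ I_G[u₁,u₃]`,
`d_G(u₁,u₂) ≤ d_H(v₁,v₂) = D(H)` and `d_G(u₂,u₃) ≥ D(H)`, then for any shortest
path `P` from `u₁` to `u₂`, the set `{(u₁,v₁),(u₂,v₂),(u₃,v₁)}` resolves
`V(P) × V(H)` in `G ⊠ H`. -/
theorem stmt14 {α β : Type*} [Fintype α] [Fintype β]
    (G : SimpleGraph α) (H : SimpleGraph β)
    (hG : G.Connected) (hH : H.Connected)
    (hn1 : 2 ≤ Fintype.card α) (hn2 : 2 ≤ Fintype.card β)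
    (hbip : H.Colorable 2)
    (u₁ u₂ u₃ : α) (v₁ v₂ : β)
    (hint : u₂ ∈ interval G u₁ u₃)
    (hd1 : G.dist u₁ u₂ ≤ H.dist v₁ v₂)
    (hd2 : H.dist v₁ v₂ = graphDiam H)
    (hd3 : graphDiam H ≤ G.dist u₂ u₃)
    (P : G.Walk u₁ u₂) (hP : P.IsPath) (hPlen : P.length = G.dist u₁ u₂) :
    ∀ x y : α × β, (strongProd G H).Adj x y →
      x.1 ∈ P.support → y.1 ∈ P.support →
        ∃ w ∈ ({(u₁, v₁), (u₂, v₂), (u₃, v₁)} : Set (α × β)),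
          (strongProd G H).dist w x ≠ (strongProd G H).dist w y :=
  stmt14_general G H hG hH hbip u₁ u₂ u₃ v₁ v₂ hint hd1 hd3 P hPlen
end
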